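/- arXiv:1201.5209 — 6 statements merged into one kernel-verified Lean document; each statement's English description precedes it below -/
import Mathlib

section
/- For every ℓ ≥ 1 and every permutation σ ∈ S_ℓ written as the word σ_1⋯σ_ℓ, the coefficient π_ℓ satisfies the reversal symmetry π_ℓ(σ_1⋯σ_ℓ) = (-1)^{ℓ+1} π_ℓ(σ_ℓ⋯σ_1). -/
/-- The coefficient `π_ℓ` evaluated on the word `σ(1)σ(2)⋯σ(ℓ)` (letters `0,…,ℓ-1`),
defined inductively: value `1` on a single letter; if the word starts with the
smallest letter `0`, recurse on the remaining (shifted) word; if it ends with `0`,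
recurse with a sign change; otherwise the value is `0`. -/
def piW : List ℕ → ℤ
  | [] => 0
  | [_] => 1
  | a :: b :: l =>
    if a = 0 then piW ((b :: l).map (· - 1))
    else if (a :: b :: l).getLast? = some 0 then
      - piW ((a :: b :: l).dropLast.map (· - 1))
    else 0
termination_by w => w.length
decreasing_by all_goals (simp; try omega)

/-- `π_ℓ(σ)` for a permutation `σ` of `ℓ` letters. -/
def piPerm {ℓ : ℕ} (σ : Equiv.Perm (Fin ℓ)) : ℤ :=
  piW ((List.finRange ℓ).map (fun j => (σ j : ℕ)))

/-- Left-nested Lie bracket of a list: `[x₁,[x₂,…,[x_{k-1},x_k]…]]`. -/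
def nestedBracket {L : Type*} [LieRing L] : List L → L
  | [] => 0
  | [x] => x
  | x :: y :: l => ⁅x, nestedBracket (y :: l)⁆

/-!
Induction on the length of the word. If it starts with the letter `0`, its reversal ends with
`0`, so both recursions strip that letter and shift the rest, leaving a shorter word and its
reversal, with a single extra sign; a word ending in `0` is the same case read backwards, and if
neither end is `0` both values vanish. Distinctness of the letters keeps `0` from sitting at both
ends and survives the shift.
-/

lemma piW_zero_cons {l : List ℕ} (hl : l ≠ []) : piW (0 :: l) = piW (l.map (· - 1)) := by
  obtain ⟨b, l, rfl⟩ := List.exists_cons_of_ne_nil hl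
  rw [piW, if_pos rfl]

lemma piW_cons_append_zero {a : ℕ} (ha : a ≠ 0) (m : List ℕ) :
    piW (a :: m ++ [0]) = -piW ((a :: m).map (· - 1)) := by
  obtain ⟨b, l, hbl⟩ :=
    List.exists_cons_of_ne_nil (List.append_ne_nil_of_right_ne_nil m (List.cons_ne_nil 0 []))
  rw [List.cons_append, hbl, piW, if_neg ha, ← hbl, ← List.cons_append, List.getLast?_concat,
    if_pos rfl, List.dropLast_concat]

lemma piW_cons_append_eq_zero {a c : ℕ} (ha : a ≠ 0) (hc : c ≠ 0) (m : List ℕ) :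
    piW (a :: m ++ [c]) = 0 := by
  obtain ⟨b, l, hbl⟩ :=
    List.exists_cons_of_ne_nil (List.append_ne_nil_of_right_ne_nil m (List.cons_ne_nil c []))
  rw [List.cons_append, hbl, piW, if_neg ha, ← hbl, ← List.cons_append, List.getLast?_concat,
    if_neg (by simpa using hc)]

lemma List.Nodup.map_sub_one_of_zero_cons {l : List ℕ} (hl : (0 :: l).Nodup) :
    (l.map (· - 1)).Nodup := by
  rw [List.nodup_cons] at hl
  refine hl.2.map_on fun x hx y hy hxy => ?_
  have : x ≠ 0 := fun h => hl.1 (h ▸ hx)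
  have : y ≠ 0 := fun h => hl.1 (h ▸ hy)
  omega

lemma piW_zero_cons_eq_neg_one_pow_mul_piW_reverse {l : List ℕ} (hl : (0 :: l).Nodup)
    (ih : piW (l.map (· - 1)) =
      (-1) ^ ((l.map (· - 1)).length + 1) * piW (l.map (· - 1)).reverse) :
    piW (0 :: l) = (-1) ^ ((0 :: l).length + 1) * piW (0 :: l).reverse := by
  rcases hr : l.reverse with _ | ⟨c, r⟩
  · obtain rfl : l = [] := List.reverse_eq_nil_iff.1 hr
    norm_num
  have hc : c ≠ 0 := by
    rintro rfl
    exact (List.nodup_cons.1 hl).1 (List.mem_reverse.1 (hr ▸ List.mem_cons_self))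
  have hl' : l ≠ [] := by
    rintro rfl
    simp at hr
  have hrev : piW (0 :: l).reverse = -piW (l.map (· - 1)).reverse := by
    rw [List.reverse_cons, hr, piW_cons_append_zero hc, ← hr, List.map_reverse]
  rw [piW_zero_cons hl', ih, hrev, List.length_map, List.length_cons]
  ring

theorem piW_eq_neg_one_pow_mul_piW_reverse :
    ∀ w : List ℕ, w.Nodup → piW w = (-1) ^ (w.length + 1) * piW w.reverse
  | [], _ => by simp [piW]
  | [_], _ => by simp [piW]
  | a :: b :: l, hw => by
    obtain ⟨m, c, hmc⟩ : ∃ m c, b :: l = m ++ [c] :=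
      ⟨_, _, (List.dropLast_append_getLast (List.cons_ne_nil b l)).symm⟩
    rw [hmc] at hw ⊢
    have hrev : (a :: (m ++ [c])).reverse = c :: (m.reverse ++ [a]) := by simp
    by_cases ha : a = 0
    · subst ha
      exact piW_zero_cons_eq_neg_one_pow_mul_piW_reverse hw
        (piW_eq_neg_one_pow_mul_piW_reverse _ hw.map_sub_one_of_zero_cons)
    by_cases hc : c = 0
    · subst hc
      have hw' : (0 :: (m.reverse ++ [a])).Nodup := hrev ▸ List.nodup_reverse.2 hw
      have hrev_case := piW_zero_cons_eq_neg_one_pow_mul_piW_reverse hw'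
        (piW_eq_neg_one_pow_mul_piW_reverse _ hw'.map_sub_one_of_zero_cons)
      rw [← hrev, List.reverse_reverse, List.length_reverse] at hrev_case
      rw [hrev_case, ← mul_assoc, ← mul_pow]
      norm_num
    · rw [hrev, ← List.cons_append (a := a), ← List.cons_append (a := c),
        piW_cons_append_eq_zero ha hc, piW_cons_append_eq_zero hc ha, mul_zero]
termination_by w => w.length
decreasing_by all_goals (have := congrArg List.length hmc; simp at this ⊢; omega)

theorem piW_reverse_general {ℓ : ℕ} (σ : Equiv.Perm (Fin ℓ)) :
    piW ((List.finRange ℓ).map fun j => (σ j : ℕ)) =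
      (-1) ^ (ℓ + 1) * piW (((List.finRange ℓ).map fun j => (σ j : ℕ)).reverse) := by
  have hw : ((List.finRange ℓ).map fun j => (σ j : ℕ)).Nodup :=
    (List.nodup_finRange ℓ).map (Fin.val_injective.comp σ.injective)
  simpa only [List.length_map, List.length_finRange] using
    piW_eq_neg_one_pow_mul_piW_reverse _ hw

/-- reversal symmetry `π_ℓ(σ₁⋯σ_ℓ) = (-1)^{ℓ+1} π_ℓ(σ_ℓ⋯σ₁)`. -/
theorem piW_reverse {ℓ : ℕ} (hℓ : 1 ≤ ℓ) (σ : Equiv.Perm (Fin ℓ)) :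
    piW ((List.finRange ℓ).map fun j => (σ j : ℕ)) =
      (-1) ^ (ℓ + 1) * piW (((List.finRange ℓ).map fun j => (σ j : ℕ)).reverse) :=
  piW_reverse_general σ
end

section
/- (Generalized Jacobi identity, second form) Let L be a Lie algebra, X_1,...,X_m ∈ L, and v = v_1⋯v_ℓ a word of length ℓ ≥ 2 in {1,...,m}. Then the left-nested bracket satisfies X_v = (1/ℓ) Σ_{σ ∈ S_ℓ} π_ℓ(σ) X_{σ_1(v)⋯σ_ℓ(v)}, i.e., ℓ·X_v = Σ_{σ ∈ S_ℓ} π_ℓ(σ) X_{σ(v)}. -/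
/-!
Only permutations with `σ 0 = 0` or `σ (ℓ-1) = 0` carry a nonzero coefficient, and these are
`0` followed, resp. preceded, by a permutation `τ` of the remaining letters, with coefficient
`π(τ)`, resp. `-π(τ)`. Splitting the sum accordingly, the first form
`∑ π(σ) [X_{σ₁}, [X_{σ₂}, … [X_{σ_ℓ}, a]…]] = [X_v, a]` (for `a` in any Lie module)
follows by induction from the Jacobi identity, and the second form by induction from the
first one, applied with `a = X_{v₁}`.
-/

open Equiv

lemma piW_zero_cons_map_succ {w : List ℕ} (hw : w ≠ []) :
    piW (0 :: w.map Nat.succ) = piW w := by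
  obtain ⟨b, l, rfl⟩ := List.exists_cons_of_ne_nil hw
  rw [List.map_cons, piW, if_pos rfl, ← List.map_cons, List.map_map]
  simp [Function.comp_def]

lemma piW_map_succ_append_zero {w : List ℕ} (hw : w ≠ []) :
    piW (w.map Nat.succ ++ [0]) = -piW w := by
  obtain ⟨b, l, rfl⟩ := List.exists_cons_of_ne_nil hw
  obtain ⟨c, l', hc⟩ := List.exists_cons_of_ne_nil (List.concat_ne_nil 0 (l.map Nat.succ))
  rw [List.map_cons, List.cons_append, hc, piW, if_neg b.succ_ne_zero, if_pos, ← hc,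
    ← List.cons_append, List.dropLast_concat, ← List.map_cons, List.map_map]
  · simp [Function.comp_def]
  · rw [← hc, ← List.cons_append, List.getLast?_concat]

lemma piW_cons_eq_zero {a : ℕ} {w : List ℕ} (hw : w ≠ []) (ha : a ≠ 0)
    (hlast : w.getLast hw ≠ 0) : piW (a :: w) = 0 := by
  obtain ⟨b, l, rfl⟩ := List.exists_cons_of_ne_nil hw
  rw [piW, if_neg ha, if_neg]
  rw [List.getLast?_eq_some_getLast (List.cons_ne_nil _ _),
    List.getLast_cons (List.cons_ne_nil _ _)]
  simpa using hlast

section ConsSnocPerm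

variable {n : ℕ}

/-- `0 ↦ 0`, `i + 1 ↦ τ i + 1`. -/
def consPerm (τ : Perm (Fin n)) : Perm (Fin (n + 1)) :=
  Perm.decomposeFin.symm (0, τ)

/-- `i ↦ τ i + 1` for `i < n`, `n ↦ 0`. -/
def snocPerm (τ : Perm (Fin n)) : Perm (Fin (n + 1)) :=
  consPerm τ * finRotate (n + 1)

@[simp] lemma consPerm_zero (τ : Perm (Fin n)) : consPerm τ 0 = 0 :=
  Perm.decomposeFin_symm_apply_zero 0 τ

@[simp] lemma consPerm_succ (τ : Perm (Fin n)) (i : Fin n) :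
    consPerm τ i.succ = (τ i).succ := by
  simp [consPerm, Perm.decomposeFin_symm_apply_succ]

@[simp] lemma snocPerm_castSucc (τ : Perm (Fin n)) (i : Fin n) :
    snocPerm τ i.castSucc = (τ i).succ := by
  simp [snocPerm]

@[simp] lemma snocPerm_last (τ : Perm (Fin n)) : snocPerm τ (Fin.last n) = 0 := by
  simp [snocPerm]

lemma ofFn_comp_consPerm {α : Type*} (τ : Perm (Fin n)) (g : Fin (n + 1) → α) :
    List.ofFn (fun j => g (consPerm τ j)) = g 0 :: List.ofFn (fun i => Fin.tail g (τ i)) := by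
  simp [List.ofFn_succ, Fin.tail]

lemma ofFn_comp_snocPerm {α : Type*} (τ : Perm (Fin n)) (g : Fin (n + 1) → α) :
    List.ofFn (fun j => g (snocPerm τ j)) = List.ofFn (fun i => Fin.tail g (τ i)) ++ [g 0] := by
  rw [List.ofFn_succ', List.concat_eq_append]
  simp [Fin.tail]

variable {M : Type*} [AddCommMonoid M]

lemma sum_ite_apply_zero_eq_zero (G : Perm (Fin (n + 1)) → M) :
    ∑ σ : Perm (Fin (n + 1)), (if σ 0 = 0 then G σ else 0) =
      ∑ τ : Perm (Fin n), G (consPerm τ) := by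
  rw [← Perm.decomposeFin.symm.sum_comp, Fintype.sum_prod_type, Finset.sum_eq_single 0]
  · simp [consPerm, Perm.decomposeFin_symm_apply_zero]
  · intro p _ hp
    simp [Perm.decomposeFin_symm_apply_zero, hp]
  · simp

lemma sum_ite_apply_last_eq_zero (G : Perm (Fin (n + 1)) → M) :
    ∑ σ : Perm (Fin (n + 1)), (if σ (Fin.last n) = 0 then G σ else 0) =
      ∑ τ : Perm (Fin n), G (snocPerm τ) := by
  rw [← Equiv.sum_comp (Equiv.mulRight (finRotate (n + 1)))]
  simpa [snocPerm] using sum_ite_apply_zero_eq_zero (fun σ => G (σ * finRotate (n + 1)))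

lemma sum_perm_eq_sum_consPerm_add_sum_snocPerm (F : Perm (Fin (n + 2)) → M)
    (hF : ∀ σ : Perm (Fin (n + 2)), σ 0 ≠ 0 → σ (Fin.last (n + 1)) ≠ 0 → F σ = 0) :
    ∑ σ, F σ = ∑ τ, F (consPerm τ) + ∑ τ, F (snocPerm τ) := by
  have hsplit (σ : Perm (Fin (n + 2))) :
      F σ = (if σ 0 = 0 then F σ else 0) + (if σ (Fin.last (n + 1)) = 0 then F σ else 0) := by
    by_cases h0 : σ 0 = 0
    · have hl : σ (Fin.last (n + 1)) ≠ 0 :=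
        fun hl => by simpa using σ.injective (hl.trans h0.symm)
      simp [h0, hl]
    · by_cases hl : σ (Fin.last (n + 1)) = 0
      · simp [h0, hl]
      · simp [h0, hl, hF σ h0 hl]
  rw [Fintype.sum_congr _ _ hsplit, Finset.sum_add_distrib, sum_ite_apply_zero_eq_zero,
    sum_ite_apply_last_eq_zero]

end ConsSnocPerm

section PiPerm

variable {n : ℕ}

lemma piPerm_eq_piW_ofFn (σ : Perm (Fin n)) :
    piPerm σ = piW (List.ofFn fun j => (σ j : ℕ)) := by
  rw [piPerm, List.ofFn_eq_map]

lemma ofFn_tail_val_eq_map_succ (τ : Perm (Fin n)) :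
    List.ofFn (fun i => Fin.tail (fun j : Fin (n + 1) => (j : ℕ)) (τ i)) =
      (List.ofFn fun i => (τ i : ℕ)).map Nat.succ := by
  simp [List.map_ofFn, Function.comp_def, Fin.tail]

lemma piPerm_consPerm (τ : Perm (Fin (n + 1))) : piPerm (consPerm τ) = piPerm τ := by
  rw [piPerm_eq_piW_ofFn, piPerm_eq_piW_ofFn, ofFn_comp_consPerm τ (fun j => (j : ℕ)),
    ofFn_tail_val_eq_map_succ, Fin.val_zero, piW_zero_cons_map_succ (by simp)]

lemma piPerm_snocPerm (τ : Perm (Fin (n + 1))) : piPerm (snocPerm τ) = -piPerm τ := by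
  rw [piPerm_eq_piW_ofFn, piPerm_eq_piW_ofFn, ofFn_comp_snocPerm τ (fun j => (j : ℕ)),
    ofFn_tail_val_eq_map_succ, Fin.val_zero, piW_map_succ_append_zero (by simp)]

lemma piPerm_eq_zero {σ : Perm (Fin (n + 2))} (h0 : σ 0 ≠ 0) (hlast : σ (Fin.last _) ≠ 0) :
    piPerm σ = 0 := by
  rw [piPerm_eq_piW_ofFn, List.ofFn_succ]
  refine piW_cons_eq_zero (by simp) (fun h => h0 (Fin.ext h)) ?_
  rw [List.getLast_ofFn]
  exact fun h => hlast (Fin.ext h)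

lemma piPerm_fin_zero (σ : Perm (Fin 0)) : piPerm σ = 0 := by
  simp [piPerm, piW]

lemma piPerm_fin_one (σ : Perm (Fin 1)) : piPerm σ = 1 := by
  simp [piPerm, piW]

end PiPerm

lemma sum_piPerm_smul_eq_sub {n : ℕ} {α M : Type*} [AddCommGroup M] (Φ : List α → M)
    (f : Fin (n + 2) → α) :
    ∑ σ : Perm (Fin (n + 2)), piPerm σ • Φ (List.ofFn fun j => f (σ j)) =
      ∑ τ : Perm (Fin (n + 1)), piPerm τ • Φ (f 0 :: List.ofFn fun i => Fin.tail f (τ i)) -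
        ∑ τ : Perm (Fin (n + 1)),
          piPerm τ • Φ (List.ofFn (fun i => Fin.tail f (τ i)) ++ [f 0]) := by
  rw [sum_perm_eq_sum_consPerm_add_sum_snocPerm _
    (fun σ h0 hlast => by rw [piPerm_eq_zero h0 hlast, zero_smul])]
  simp only [piPerm_consPerm, piPerm_snocPerm, ofFn_comp_consPerm, ofFn_comp_snocPerm, neg_smul,
    Finset.sum_neg_distrib, sub_eq_add_neg]

section Lie

variable {L : Type*} [LieRing L]

lemma nestedBracket_cons {l : List L} (hl : l ≠ []) (x : L) :
    nestedBracket (x :: l) = ⁅x, nestedBracket l⁆ := by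
  obtain ⟨y, l, rfl⟩ := List.exists_cons_of_ne_nil hl
  rw [nestedBracket]

lemma nestedBracket_ofFn_succ {n : ℕ} (f : Fin (n + 2) → L) :
    nestedBracket (List.ofFn f) = ⁅f 0, nestedBracket (List.ofFn (Fin.tail f))⁆ := by
  rw [List.ofFn_succ, nestedBracket_cons (by simp)]
  rfl

lemma nestedBracket_append_singleton (l : List L) (a : L) :
    nestedBracket (l ++ [a]) = l.foldr (⁅·, ·⁆) a := by
  induction l with
  | nil => rfl
  | cons x l ih => rw [List.cons_append, nestedBracket_cons (by simp), ih, List.foldr_cons]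

variable {M : Type*} [AddCommGroup M] [LieRingModule L M]

theorem sum_piPerm_smul_foldr_lie : ∀ {n : ℕ} (f : Fin n → L) (m : M),
    ∑ σ : Perm (Fin n), piPerm σ • (List.ofFn fun j => f (σ j)).foldr (⁅·, ·⁆) m =
      ⁅nestedBracket (List.ofFn f), m⁆
  | 0, f, m => by simp [piPerm_fin_zero, nestedBracket]
  | 1, f, m => by simp [piPerm_fin_one, nestedBracket, Subsingleton.elim _ (0 : Fin 1)]
  | n + 2, f, m => by
    rw [sum_piPerm_smul_eq_sub (fun l => l.foldr (⁅·, ·⁆) m)]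
    simp only [List.foldr_cons, List.foldr_append, List.foldr_nil, ← lie_zsmul, ← lie_sum,
      sum_piPerm_smul_foldr_lie]
    rw [nestedBracket_ofFn_succ, lie_lie]

theorem natCast_smul_nestedBracket_eq_sum_piPerm_smul : ∀ {n : ℕ} (f : Fin n → L),
    (n : ℤ) • nestedBracket (List.ofFn f) =
      ∑ σ : Perm (Fin n), piPerm σ • nestedBracket (List.ofFn fun j => f (σ j))
  | 0, f => by simp [piPerm_fin_zero, nestedBracket]
  | 1, f => by simp [piPerm_fin_one, nestedBracket, Subsingleton.elim _ (0 : Fin 1)]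
  | n + 2, f => by
    rw [sum_piPerm_smul_eq_sub nestedBracket]
    simp only [nestedBracket_append_singleton, sum_piPerm_smul_foldr_lie]
    have hcons (τ : Perm (Fin (n + 1))) :
        nestedBracket (f 0 :: List.ofFn fun i => Fin.tail f (τ i)) =
          ⁅f 0, nestedBracket (List.ofFn fun i => Fin.tail f (τ i))⁆ :=
      nestedBracket_cons (by simp) _
    simp only [hcons, ← lie_zsmul, ← lie_sum,
      ← natCast_smul_nestedBracket_eq_sum_piPerm_smul (Fin.tail f)]
    rw [nestedBracket_ofFn_succ, lie_zsmul, ← lie_skew]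
    push_cast
    module

end Lie

theorem generalized_jacobi_second_general {L : Type*} [LieRing L]
    {m ℓ : ℕ} (X : Fin m → L) (v : Fin ℓ → Fin m) :
    (ℓ : ℤ) • nestedBracket ((List.finRange ℓ).map fun j => X (v j)) =
      ∑ σ : Equiv.Perm (Fin ℓ),
        piPerm σ • nestedBracket ((List.finRange ℓ).map fun j => X (v (σ j))) := by
  simp only [← List.ofFn_eq_map]
  exact natCast_smul_nestedBracket_eq_sum_piPerm_smul (fun j => X (v j))

/-- generalized Jacobi identity, second form:
`ℓ · X_v = Σ_{σ ∈ S_ℓ} π_ℓ(σ) X_{σ(v)}`. -/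
theorem generalized_jacobi_second {L : Type*} [LieRing L] [LieAlgebra ℝ L]
    {m ℓ : ℕ} (hℓ : 2 ≤ ℓ) (X : Fin m → L) (v : Fin ℓ → Fin m) :
    (ℓ : ℤ) • nestedBracket ((List.finRange ℓ).map fun j => X (v j)) =
      ∑ σ : Equiv.Perm (Fin ℓ),
        piPerm σ • nestedBracket ((List.finRange ℓ).map fun j => X (v (σ j))) :=
  generalized_jacobi_second_general X v
end

section
/- (Baker's sixth-order identity) In any Lie algebra, for elements a and b: [a,[b,[b,[b,[b,a]]]]] - 2[b,[a,[b,[b,[b,a]]]]] + [b,[b,[a,[b,[b,a]]]]] = 0. (In the nested bracket word notation: [ab⁴a] - 2[bab³a] + [b²ab²a] = 0.) -/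
/-! With `D = ⁅b, ·⁆` and `fᵢⱼ = ⁅Dⁱa, Dʲa⁆`, the Leibniz rule gives
`D⁅a, D³a⁆ = f₁₃ + f₀₄` and `D²⁅a, D²a⁆ = f₂₂ + 2 f₁₃ + f₀₄`, where `f₂₂ = 0`;
the identity is then a linear relation between `f₀₄` and `f₁₃`. -/

theorem leibniz_lie_two {L : Type*} [LieRing L] (b x y : L) :
    ⁅b, ⁅b, ⁅x, y⁆⁆⁆ = ⁅⁅b, ⁅b, x⁆⁆, y⁆ + (2 : ℤ) • ⁅⁅b, x⁆, ⁅b, y⁆⁆ + ⁅x, ⁅b, ⁅b, y⁆⁆⁆ := by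
  rw [leibniz_lie b x y, lie_add, leibniz_lie b ⁅b, x⁆ y, leibniz_lie b x ⁅b, y⁆]
  abel

theorem baker_sixth_order_general {L : Type*} [LieRing L] (a b : L) :
    ⁅a, ⁅b, ⁅b, ⁅b, ⁅b, a⁆⁆⁆⁆⁆ - (2 : ℤ) • ⁅b, ⁅a, ⁅b, ⁅b, ⁅b, a⁆⁆⁆⁆⁆ +
      ⁅b, ⁅b, ⁅a, ⁅b, ⁅b, a⁆⁆⁆⁆⁆ = 0 := by
  rw [leibniz_lie b a, leibniz_lie_two b a, lie_self, zero_add]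
  abel

/-- Baker's sixth-order identity
`[ab⁴a] - 2[bab³a] + [b²ab²a] = 0`. -/
theorem baker_sixth_order {L : Type*} [LieRing L] [LieAlgebra ℝ L] (a b : L) :
    ⁅a, ⁅b, ⁅b, ⁅b, ⁅b, a⁆⁆⁆⁆⁆ - (2 : ℤ) • ⁅b, ⁅a, ⁅b, ⁅b, ⁅b, a⁆⁆⁆⁆⁆ +
      ⁅b, ⁅b, ⁅a, ⁅b, ⁅b, a⁆⁆⁆⁆⁆ = 0 :=
  baker_sixth_order_general a b
end

section
/- Let m, p ∈ ℕ and let C : {1,...,m}^p → ℝ be coefficients. Suppose that for every N ∈ ℕ, for all analytic (or smooth, or polynomial-coefficient) vector fields X_1,...,X_m on ℝ^N and every analytic function ψ : ℝ^N → ℝ, the differential operator P(X_1,...,X_m) = Σ_{(k_1,...,k_p)} C(k_1,...,k_p) X_{k_1}X_{k_2}⋯X_{k_p} annihilates ψ at every point. Then all coefficients vanish: C(k_1,...,k_p) = 0 for every (k_1,...,k_p) ∈ {1,...,m}^p. -/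
/-- The action of a vector field (given by its coefficient map `f`) on a scalar
function: `(f·∇)ψ(x) = dψ(x)[f(x)]`. -/
noncomputable def vfApply {N : ℕ} (f : (Fin N → ℝ) → (Fin N → ℝ)) (ψ : (Fin N → ℝ) → ℝ) :
    (Fin N → ℝ) → ℝ :=
  fun x => fderiv ℝ ψ x (f x)

lemma vfApply_const_mul_apply {N : ℕ} (f : (Fin N → ℝ) → (Fin N → ℝ)) (c : ℝ) (i : Fin N) :
    vfApply f (fun x => c * x i) = fun x => c * f x i := by
  funext x
  have hL : (fun x : Fin N → ℝ => c * x i)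
      = ⇑(c • ContinuousLinearMap.proj (R := ℝ) (φ := fun _ : Fin N => ℝ) i) := rfl
  rw [vfApply, hL, ContinuousLinearMap.fderiv]
  rfl

section ChainField

variable {m p : ℕ} (k₀ : Fin p → Fin m)

/-- `X_i = ∑_{j : k₀ j = i} x_j ∂_{j+1}` on `ℝ^{p+1}`: the word `X_{k₀ 0} ⋯ X_{k₀ (p-1)}` moves
the coordinate `x_p` down to `x_0` one index at a time, and every other word of length `p`
kills `x_p`. -/
noncomputable def chainField (i : Fin m) (x : Fin (p + 1) → ℝ) : Fin (p + 1) → ℝ :=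
  Fin.cons 0 fun j => if k₀ j = i then x j.castSucc else 0

lemma contDiff_chainField (i : Fin m) : ContDiff ℝ ⊤ (chainField k₀ i) := by
  refine contDiff_pi.2 fun l => ?_
  cases l using Fin.cases with
  | zero => simpa [chainField] using contDiff_const
  | succ j =>
    simp only [chainField, Fin.cons_succ]
    split_ifs
    · exact contDiff_apply ℝ ℝ j.castSucc
    · exact contDiff_const

lemma foldr_chainField_drop (k : Fin p → Fin m) {t : ℕ} (ht : t ≤ p) :
    (List.drop t (List.finRange p)).foldr (fun j acc => vfApply (chainField k₀ (k j)) acc)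
        (fun x => x (Fin.last p))
      = fun x => ((List.drop t (List.finRange p)).map
          fun j => if k₀ j = k j then (1 : ℝ) else 0).prod * x ⟨t, by omega⟩ := by
  induction ht using Nat.decreasingInduction with
  | self =>
    simp [List.drop_eq_nil_of_le, Fin.last]
  | of_succ t ht ih =>
    have hdrop :
        List.drop t (List.finRange p) = ⟨t, ht⟩ :: List.drop (t + 1) (List.finRange p) := by
      simp [List.drop_eq_getElem_cons (l := List.finRange p) (by simpa using ht)]
    rw [hdrop, List.foldr_cons, ih, vfApply_const_mul_apply]
    funext x
    have hsucc : (⟨t + 1, by omega⟩ : Fin (p + 1)) = Fin.succ ⟨t, ht⟩ := rfl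
    simp only [hsucc, chainField, Fin.cons_succ, List.map_cons, List.prod_cons]
    split_ifs <;> simp

lemma foldr_chainField_apply_one (k : Fin p → Fin m) :
    (List.finRange p).foldr (fun j acc => vfApply (chainField k₀ (k j)) acc)
        (fun x => x (Fin.last p)) 1 = if k = k₀ then 1 else 0 := by
  have h := congrFun (foldr_chainField_drop k₀ k (Nat.zero_le p)) 1
  rw [List.drop_zero] at h
  rw [h, ← Fin.prod_univ_def, Fintype.prod_boole]
  simp [funext_iff, eq_comm]

end ChainField

/-- if the noncommutative polynomial differential operator
`P(X₁,…,X_m) = Σ_k C(k) X_{k₁}⋯X_{k_p}` annihilates every smooth function for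
every choice of smooth vector fields in every dimension `N`, then all
coefficients `C(k)` vanish. -/
theorem universal_vanishing_polynomial {m p : ℕ} (C : (Fin p → Fin m) → ℝ)
    (h : ∀ (N : ℕ) (X : Fin m → (Fin N → ℝ) → (Fin N → ℝ)),
      (∀ j, ContDiff ℝ ⊤ (X j)) →
      ∀ ψ : (Fin N → ℝ) → ℝ, ContDiff ℝ ⊤ ψ →
      ∀ x : Fin N → ℝ,
        ∑ k : Fin p → Fin m,
          C k * (List.foldr (fun j acc => vfApply (X (k j)) acc) ψ
            (List.finRange p)) x = 0) :
    ∀ k : Fin p → Fin m, C k = 0 := by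
  intro k₀
  have h₀ := h (p + 1) (chainField k₀) (contDiff_chainField k₀) (fun x => x (Fin.last p))
    (contDiff_apply ℝ ℝ (Fin.last p)) 1
  simpa [foldr_chainField_apply_one] using h₀
end

section
/- The multilinear case of the universal-vanishing theorem for noncommutative polynomials of vector fields: let B : S_p → ℝ and suppose Q(X_1,...,X_p) = Σ_{σ ∈ S_p} B(σ) X_{σ_1}⋯X_{σ_p} satisfies Q(X_1,...,X_p)ψ(x) = 0 for all polynomial vector fields X_1,...,X_p on ℝ^N (every N), all polynomial ψ, and all x. Then B(σ) = 0 for every σ ∈ S_p. In particular, taking N = p+1, X_j = x_j ∂_{j+1} and ψ(x) = x_{p+1}, one has X_{σ_1}⋯X_{σ_p}ψ = 1 if σ = id and 0 otherwise. -/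
/-- The vector field `x_k ∂_{k+1}` on `ℝ^{p+1}`. -/
def Yfield (p : ℕ) (k : Fin p) : (Fin (p+1) → ℝ) → (Fin (p+1) → ℝ) :=
  fun x i => if i = k.succ then x k.castSucc else 0

lemma Yfield_contDiff (p : ℕ) (k : Fin p) : ContDiff ℝ (⊤ : ℕ∞) (Yfield p k) := by
  apply contDiff_pi.2
  intro i
  by_cases hik : i = k.succ
  · simp only [Yfield, hik, if_pos rfl]
    exact (ContinuousLinearMap.proj (R := ℝ) (φ := fun _ : Fin (p+1) => ℝ) k.castSucc).contDiff
  · simp only [Yfield, if_neg hik]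
    exact contDiff_const

lemma vfApply_coord {N : ℕ} (f : (Fin N → ℝ) → (Fin N → ℝ)) (j : Fin N) :
    vfApply f (fun x => x j) = fun x => f x j := by
  funext x
  have h : (fun x : Fin N → ℝ => x j)
      = ⇑(ContinuousLinearMap.proj (R := ℝ) (φ := fun _ : Fin N => ℝ) j) := rfl
  simp only [vfApply, h, ContinuousLinearMap.fderiv]
  rfl

lemma vfApply_zero {N : ℕ} (f : (Fin N → ℝ) → (Fin N → ℝ)) :
    vfApply f (fun _ => 0) = fun _ => 0 := by
  funext x
  simp [vfApply]

/-- Symbolic computation of the composite `Y_{k₁} ⋯ Y_{kₘ}` applied to the coordinate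
function `x_i`: returns `some j` if the result is the coordinate `x_j`, `none` if zero. -/
def chainG {p : ℕ} : List (Fin p) → Fin (p+1) → Option (Fin (p+1))
  | [], i => some i
  | k :: L, i =>
    match chainG L i with
    | none => none
    | some j => if j = k.succ then some k.castSucc else none

lemma chainG_nil {p : ℕ} (i : Fin (p+1)) : chainG [] i = some i := rfl

lemma chainG_cons_none {p : ℕ} {L : List (Fin p)} {i : Fin (p+1)} (k : Fin p)
    (h : chainG L i = none) : chainG (k :: L) i = none := by
  simp [chainG, h]

lemma chainG_cons_some {p : ℕ} {L : List (Fin p)} {i j : Fin (p+1)} (k : Fin p)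
    (h : chainG L i = some j) :
    chainG (k :: L) i = if j = k.succ then some k.castSucc else none := by
  simp [chainG, h]

lemma chainG_some_iff {p : ℕ} (L : List (Fin p)) (i j : Fin (p+1)) :
    chainG L i = some j ↔
      (L.map Fin.val = List.range' j.val L.length ∧ j.val + L.length = i.val) := by
  induction L generalizing j with
  | nil =>
    constructor
    · intro h
      obtain rfl : i = j := Option.some_injective _ h
      exact ⟨rfl, rfl⟩
    · rintro ⟨-, h2⟩
      rw [chainG_nil]
      exact congrArg some (Fin.ext (by simpa using h2.symm))
  | cons k L ih =>
    simp only [List.map_cons, List.length_cons, List.range'_succ]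
    constructor
    · intro h
      rcases hG : chainG L i with _ | j'
      · rw [chainG_cons_none k hG] at h; exact absurd h (by simp)
      · rw [chainG_cons_some k hG] at h
        by_cases hjk : j' = k.succ
        · rw [if_pos hjk] at h
          have hj : j = k.castSucc := by simpa using h.symm
          rcases (ih j').1 hG with ⟨h1, h2⟩
          subst hj hjk
          simp only [Fin.coe_castSucc, Fin.val_succ] at h1 h2 ⊢
          exact ⟨by rw [h1], by omega⟩
        · rw [if_neg hjk] at h; exact absurd h (by simp)
    · rintro ⟨h1, h2⟩
      obtain ⟨hk, htl⟩ := List.cons_eq_cons.mp h1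
      have hL : L.map Fin.val = List.range' ((k.succ : Fin (p+1)) : ℕ) L.length := by
        rw [htl]; congr 1; simp [Fin.val_succ, hk]
      have h2' : ((k.succ : Fin (p+1)) : ℕ) + L.length = i.val := by
        simp only [Fin.val_succ]; omega
      rw [chainG_cons_some k ((ih k.succ).2 ⟨hL, h2'⟩), if_pos rfl]
      exact congrArg some (Fin.ext (by simp [hk]))

lemma fold_eq {p : ℕ} (i : Fin (p+1)) (L : List (Fin p)) :
    List.foldr (fun k acc => vfApply (Yfield p k) acc) (fun x => x i) L
      = fun x => (chainG L i).elim 0 x := by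
  induction L with
  | nil => rfl
  | cons k L ih =>
    rw [List.foldr_cons, ih]
    rcases hG : chainG L i with _ | j
    · rw [chainG_cons_none k hG]
      simpa using vfApply_zero (Yfield p k)
    · rw [chainG_cons_some k hG]
      simp only [Option.elim]
      rw [vfApply_coord (Yfield p k) j]
      by_cases hjk : j = k.succ
      · rw [if_pos hjk]
        funext x
        simp [Yfield, hjk]
      · rw [if_neg hjk]
        funext x
        simp [Yfield, hjk]

lemma chainG_key {p : ℕ} (σ₀ σ : Equiv.Perm (Fin p)) :
    chainG ((List.finRange p).map (fun j => σ₀⁻¹ (σ j))) (Fin.last p)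
      = if σ = σ₀ then some ⟨0, Nat.succ_pos p⟩ else none := by
  by_cases hσ : σ = σ₀
  · subst hσ
    rw [if_pos rfl]
    rw [(chainG_some_iff _ _ _)]
    constructor
    · simp only [List.map_map, List.length_map, List.length_finRange]
      have : (Fin.val ∘ fun j => σ⁻¹ (σ j)) = Fin.val := by
        funext j; simp
      rw [this, ← List.range_eq_range', List.map_coe_finRange_eq_range]
    · simp [List.length_map, List.length_finRange, Fin.val_last]
  · rw [if_neg hσ]
    rcases hG : chainG ((List.finRange p).map (fun j => σ₀⁻¹ (σ j))) (Fin.last p) with _ | j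
    · rfl
    · exfalso
      rcases (chainG_some_iff _ _ _).1 hG with ⟨h1, h2⟩
      simp only [List.length_map, List.length_finRange, Fin.val_last] at h1 h2
      have hj0 : (j : ℕ) = 0 := by omega
      rw [hj0, ← List.range_eq_range'] at h1
      have h1' : ((List.finRange p).map (fun j => σ₀⁻¹ (σ j))).map Fin.val
          = (List.finRange p).map Fin.val := by
        rw [h1, List.map_coe_finRange_eq_range]
      have heq : (List.finRange p).map (fun j => σ₀⁻¹ (σ j)) = List.finRange p :=
        List.map_injective_iff.mpr Fin.val_injective h1'
      apply hσ
      ext a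
      have := congrArg (fun l => l[a.val]?) heq
      have ha : σ₀⁻¹ (σ a) = a := by
        have hmem : ∀ b : Fin p, (fun j => σ₀⁻¹ (σ j)) b = id b := by
          intro b
          have : (List.finRange p).map (fun j => σ₀⁻¹ (σ j)) = (List.finRange p).map id := by
            simpa using heq
          exact List.map_eq_map_iff.mp this b (List.mem_finRange b)
        simpa using hmem a
      have h3 := congrArg σ₀ ha
      simp only [Equiv.Perm.coe_inv, Equiv.apply_symm_apply] at h3
      exact congrArg Fin.val h3

/-- the multilinear case of the universal-vanishing theorem:
if `Q(X₁,…,X_p) = Σ_{σ ∈ S_p} B(σ) X_{σ₁}⋯X_{σ_p}` annihilates every smooth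
function for every choice of smooth vector fields in every dimension `N`,
then `B(σ) = 0` for every permutation `σ`. -/
theorem universal_vanishing_multilinear {p : ℕ} (B : Equiv.Perm (Fin p) → ℝ)
    (h : ∀ (N : ℕ) (X : Fin p → (Fin N → ℝ) → (Fin N → ℝ)),
      (∀ j, ContDiff ℝ (⊤ : ℕ∞) (X j)) →
      ∀ ψ : (Fin N → ℝ) → ℝ, ContDiff ℝ (⊤ : ℕ∞) ψ →
      ∀ x : Fin N → ℝ,
        ∑ σ : Equiv.Perm (Fin p),
          B σ * (List.foldr (fun j acc => vfApply (X (σ j)) acc) ψ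
            (List.finRange p)) x = 0) :
    ∀ σ : Equiv.Perm (Fin p), B σ = 0 := by
  intro σ₀
  have hψ : ContDiff ℝ (⊤ : ℕ∞) (fun x : Fin (p+1) → ℝ => x (Fin.last p)) :=
    (ContinuousLinearMap.proj (R := ℝ) (φ := fun _ : Fin (p+1) => ℝ) (Fin.last p)).contDiff
  have key := h (p+1) (fun j => Yfield p (σ₀⁻¹ j)) (fun j => Yfield_contDiff p _)
    (fun x => x (Fin.last p)) hψ (fun _ => 1)
  have hfold : ∀ σ : Equiv.Perm (Fin p),
      List.foldr (fun j acc => vfApply (Yfield p (σ₀⁻¹ (σ j))) acc)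
        (fun x => x (Fin.last p)) (List.finRange p)
      = fun x => (chainG ((List.finRange p).map (fun j => σ₀⁻¹ (σ j))) (Fin.last p)).elim 0 x := by
    intro σ
    rw [← fold_eq (Fin.last p) ((List.finRange p).map (fun j => σ₀⁻¹ (σ j))),
      List.foldr_map]
  have hterm : ∀ σ : Equiv.Perm (Fin p),
      (List.foldr (fun j acc => vfApply (Yfield p (σ₀⁻¹ (σ j))) acc)
        (fun x => x (Fin.last p)) (List.finRange p)) (fun _ => (1:ℝ))
      = if σ = σ₀ then 1 else 0 := by
    intro σ
    rw [hfold σ, chainG_key σ₀ σ]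
    by_cases hσ : σ = σ₀ <;> simp [hσ]
  have hsum : ∑ σ : Equiv.Perm (Fin p), B σ * (if σ = σ₀ then (1:ℝ) else 0) = 0 := by
    have hc : ∑ σ : Equiv.Perm (Fin p), B σ * (if σ = σ₀ then (1:ℝ) else 0)
        = ∑ σ : Equiv.Perm (Fin p),
            B σ * (List.foldr (fun j acc => vfApply (Yfield p (σ₀⁻¹ (σ j))) acc)
              (fun x => x (Fin.last p)) (List.finRange p)) (fun _ => (1:ℝ)) :=
      Finset.sum_congr rfl (fun σ _ => by rw [hterm σ])
    rw [hc]
    exact key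
  simpa [Finset.sum_ite_eq', mul_comm] using hsum
end

section
/- (Commutativity of Lie derivative with flow conjugation, C¹ case) Let U = ξ·∇ and V = η·∇ be C¹ vector fields on ℝ^n with complete (or locally defined) flows, and let ψ ∈ C¹(ℝ^n). Then for each x and small |t|, the function t ↦ U(ψ ∘ e^{-tV})(e^{tV}x) is differentiable with d/dt [U(ψ∘e^{-tV})(e^{tV}x)] = [V,U](ψ∘e^{-tV})(e^{tV}x), where [V,U] := (Vξ − Uη)·∇ (with Vξ meaning the directional derivative of each component of ξ along V). -/
/-!
Writing `J s = Dφ_s(x)`, the group law `φ_{-s} ∘ φ_s = id` turns the differentiated quantity into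
`Dψ(x)` applied to the pullback `J s⁻¹ ξ(φ_s x)` of `ξ` by `φ_s`; its derivative is
`J t⁻¹ [η, ξ](φ_t x)` once `J` satisfies the variational equation `J' s = Dη(φ_s x) ∘ J s`.
No second derivatives are needed for that: by the group law it suffices that `h ↦ Dφ_h(z)` has
derivative `Dη(z)` at `h = 0`, i.e. that `y ↦ φ_h y - y - h Dη(z) y` has Lipschitz constant
`o(h)` near `z`. This follows from the strict differentiability of `η` at `z` and the Grönwall
bound `‖(φ_u y - φ_u z) - (y - z)‖ ≤ (e^{Ku} - 1) ‖y - z‖` for short times `u ≥ 0`; negative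
times are handled by reversing the flow.
-/

open Set Filter Metric Topology Real VectorField
open scoped NNReal

theorem ODE_solution_unique_of_locallyLipschitz {E : Type*} [NormedAddCommGroup E]
    [NormedSpace ℝ E] {v : E → E} (hv : LocallyLipschitz v) {f g : ℝ → E}
    (hf : ∀ t, HasDerivAt f (v (f t)) t) (hg : ∀ t, HasDerivAt g (v (g t)) t) {t₀ : ℝ}
    (heq : f t₀ = g t₀) : f = g := by
  have hfc : Continuous f := continuous_iff_continuousAt.2 fun t => (hf t).continuousAt
  have hgc : Continuous g := continuous_iff_continuousAt.2 fun t => (hg t).continuousAt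
  have hopen : IsOpen {t | f t = g t} := by
    refine isOpen_iff_mem_nhds.2 fun t ht => ?_
    obtain ⟨K, U, hU, hK⟩ := hv (f t)
    have hgU : U ∈ 𝓝 (g t) := (show f t = g t from ht) ▸ hU
    exact ODE_solution_unique_of_eventually (v := fun _ => v) (s := fun _ => U)
      (Eventually.of_forall fun _ => hK)
      (Eventually.of_forall hf |>.and (hfc.continuousAt.preimage_mem_nhds hU))
      (Eventually.of_forall hg |>.and (hgc.continuousAt.preimage_mem_nhds hgU)) ht
  have huniv := IsClopen.eq_univ ⟨isClosed_eq hfc hgc, hopen⟩ ⟨t₀, heq⟩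
  exact funext fun t => (huniv ▸ mem_univ t : t ∈ {t | f t = g t})

theorem gronwallBound_zero_mul (K δ x : ℝ) :
    gronwallBound 0 K (K * δ) x = δ * (exp (K * x) - 1) := by
  rcases eq_or_ne K 0 with rfl | hK
  · simp [gronwallBound_K0]
  · rw [gronwallBound_of_K_ne_0 hK]
    field_simp
    ring

theorem HasDerivAt.clm_inverse {𝕜 E : Type*} [NontriviallyNormedField 𝕜] [NormedAddCommGroup E]
    [NormedSpace 𝕜 E] [CompleteSpace E] {J : 𝕜 → E →L[𝕜] E} {J' : E →L[𝕜] E} {t : 𝕜}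
    (hJ : HasDerivAt J J' t) (ht : (J t).IsInvertible) :
    HasDerivAt (fun s => (J s).inverse) (-((J t).inverse ∘L J' ∘L (J t).inverse)) t := by
  obtain ⟨e, he⟩ := ht
  set u := (ContinuousLinearEquiv.unitsEquiv 𝕜 E).symm e
  have hu : (u : E →L[𝕜] E) = J t := he
  have hinv : ((u⁻¹ : (E →L[𝕜] E)ˣ) : E →L[𝕜] E) = (J t).inverse := by
    rw [← hu, ← ContinuousLinearMap.ringInverse_eq_inverse, Ring.inverse_unit]
  have := (hu ▸ hasFDerivAt_ringInverse (𝕜 := 𝕜) u).comp_hasDerivAt t hJ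
  rw [ContinuousLinearMap.ringInverse_eq_inverse, hinv] at this
  exact this.congr_deriv (by simp [ContinuousLinearMap.mul_def, ContinuousLinearMap.comp_assoc])

section Flow

variable {E : Type*} [NormedAddCommGroup E] [NormedSpace ℝ E] {η : E → E} {φ : ℝ → E → E}

structure IsFlow (η : E → E) (φ : ℝ → E → E) : Prop where
  zero_apply : ∀ x, φ 0 x = x
  hasDerivAt : ∀ t x, HasDerivAt (fun s => φ s x) (η (φ t x)) t

namespace IsFlow

theorem zero_eq (hφ : IsFlow η φ) : φ 0 = id := funext hφ.zero_apply

theorem continuous_apply (hφ : IsFlow η φ) (x : E) : Continuous fun t => φ t x :=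
  continuous_iff_continuousAt.2 fun t => (hφ.hasDerivAt t x).continuousAt

theorem neg (hφ : IsFlow η φ) : IsFlow (fun y => -η y) (fun t => φ (-t)) where
  zero_apply x := by simpa using hφ.zero_apply x
  hasDerivAt t x := by
    simpa [Function.comp_def] using (hφ.hasDerivAt (-t) x).scomp t (hasDerivAt_neg t)

theorem map_add (hφ : IsFlow η φ) (hη : LocallyLipschitz η) (s t : ℝ) (x : E) :
    φ (s + t) x = φ s (φ t x) := by
  have h := ODE_solution_unique_of_locallyLipschitz hη (t₀ := 0)
    (fun s => (hφ.hasDerivAt (s + t) x).comp_add_const s t) (fun s => hφ.hasDerivAt s (φ t x))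
    (by simp [hφ.zero_apply])
  exact congrFun h s

theorem map_neg_map (hφ : IsFlow η φ) (hη : LocallyLipschitz η) (t : ℝ) (x : E) :
    φ (-t) (φ t x) = x := by
  rw [← hφ.map_add hη, neg_add_cancel, hφ.zero_apply]

theorem exists_pos_mapsTo_of_mem_nhds (hφ : IsFlow η φ) {z : E} (hη : ContinuousAt η z)
    {U : Set E} (hU : U ∈ 𝓝 z) :
    ∃ T > 0, ∃ V ∈ 𝓝 z, ∀ u ∈ Icc 0 T, MapsTo (φ u) V U := by
  set M := ‖η z‖ + 1
  have hM : 0 < M := by positivity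
  obtain ⟨ε, hε, hball⟩ := Metric.mem_nhds_iff.1
    (inter_mem hU (hη.norm.eventually_lt_const (lt_add_one ‖η z‖)))
  set T := ε / (8 * M)
  have hB : ∀ y ∈ ball z (ε / 2), ∀ u ∈ Icc 0 T, dist y z + 2 * M * u < ε := by
    intro y hy u hu
    have : 2 * M * u ≤ ε / 4 := by
      calc 2 * M * u ≤ 2 * M * T := by gcongr; exact hu.2
        _ = ε / 4 := by simp only [T]; field_simp; ring
    linarith [mem_ball.1 hy]
  refine ⟨T, by positivity, ball z (ε / 2), ball_mem_nhds z (by positivity), fun u hu y hy => ?_⟩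
  -- inside `ball z ε` the speed is `< M`, so the trajectory never reaches the barrier `B`
  have hdist : ‖φ u y - z‖ ≤ dist y z + 2 * M * u := by
    refine image_norm_le_of_norm_deriv_right_lt_deriv_boundary (a := 0) (b := T)
      (f := fun u => φ u y - z) (f' := fun u => η (φ u y))
      (B := fun u => dist y z + 2 * M * u) (B' := fun _ => 2 * M)
      ((hφ.continuous_apply y).sub continuous_const).continuousOn
      (fun u _ => ((hφ.hasDerivAt u y).sub_const z).hasDerivWithinAt)
      (by simp [hφ.zero_apply, dist_eq_norm])
      (fun u => by simpa using ((hasDerivAt_id u).const_mul (2 * M)).const_add (dist y z))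
      (fun v hv hv_eq => ?_) hu
    have hmem : φ v y ∈ ball z ε := by
      rw [mem_ball, dist_eq_norm, hv_eq]
      exact hB y hy v (Ico_subset_Icc_self hv)
    linarith [(hball hmem).2.out]
  refine (hball ?_).1
  rw [mem_ball, dist_eq_norm]
  exact hdist.trans_lt (hB y hy u hu)

theorem norm_sub_sub_le_of_lipschitzOnWith (hφ : IsFlow η φ) {K : ℝ≥0} {U : Set E}
    (hK : LipschitzOnWith K η U) {T : ℝ} {y z : E} (hy : ∀ u ∈ Icc 0 T, φ u y ∈ U)
    (hz : ∀ u ∈ Icc 0 T, φ u z ∈ U) (u : ℝ) (hu : u ∈ Icc 0 T) :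
    ‖φ u y - φ u z - (y - z)‖ ≤ ‖y - z‖ * (exp (K * u) - 1) := by
  have hbound : ∀ v ∈ Ico 0 T, ‖η (φ v y) - η (φ v z)‖ ≤
      K * ‖φ v y - φ v z - (y - z)‖ + K * ‖y - z‖ := by
    intro v hv
    have hv' := Ico_subset_Icc_self hv
    calc ‖η (φ v y) - η (φ v z)‖ ≤ K * ‖φ v y - φ v z‖ :=
          hK.norm_sub_le (hy v hv') (hz v hv')
      _ ≤ K * (‖φ v y - φ v z - (y - z)‖ + ‖y - z‖) := by
          gcongr; exact norm_le_norm_sub_add _ _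
      _ = _ := mul_add _ _ _
  have := norm_le_gronwallBound_of_norm_deriv_right_le
    (f := fun v => φ v y - φ v z - (y - z)) (f' := fun v => η (φ v y) - η (φ v z)) (δ := 0)
    (((hφ.continuous_apply y).sub (hφ.continuous_apply z)).sub continuous_const).continuousOn
    (fun v _ => (((hφ.hasDerivAt v y).sub (hφ.hasDerivAt v z)).sub_const _).hasDerivWithinAt)
    (by simp [hφ.zero_apply]) hbound u hu
  rwa [sub_zero, gronwallBound_zero_mul] at this

theorem exists_norm_sub_sub_le (hφ : IsFlow η φ) {A : E →L[ℝ] E} {z : E}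
    (hη : HasStrictFDerivAt η A z) {c : ℝ} (hc : 0 < c) :
    ∃ T > 0, ∃ V ∈ 𝓝 z, ∀ y ∈ V, ∀ u ∈ Icc 0 T,
      ‖η (φ u y) - η (φ u z) - A (y - z)‖ ≤ c * ‖y - z‖ := by
  set ε : ℝ≥0 := (c / 2).toNNReal
  have hε : (ε : ℝ) = c / 2 := Real.coe_toNNReal _ (by positivity)
  obtain ⟨W, hW, happrox⟩ := hη.approximates_deriv_on_nhds (c := ε) (Or.inr (by simpa [ε]))
  set K := ‖A‖₊ + ε
  have hK : LipschitzOnWith K η W := lipschitzOnWith_iff_restrict.2 happrox.lipschitz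
  obtain ⟨T₀, hT₀, V, hV, hmaps⟩ := hφ.exists_pos_mapsTo_of_mem_nhds hη.continuousAt hW
  set β : ℝ → ℝ := fun u => c / 2 * exp (K * u) + ‖A‖ * (exp (K * u) - 1)
  have hβ : ∀ᶠ u in 𝓝 0, β u < c := by
    refine (Continuous.tendsto (by fun_prop) 0).eventually_lt_const ?_
    simp [β]; linarith
  obtain ⟨δ, hδ, hδβ⟩ := Metric.eventually_nhds_iff.1 hβ
  refine ⟨min T₀ (δ / 2), by positivity, V, hV, fun y hy u hu => ?_⟩
  have huT₀ : u ∈ Icc 0 T₀ := ⟨hu.1, hu.2.trans (min_le_left _ _)⟩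
  have hyW : ∀ v ∈ Icc 0 T₀, φ v y ∈ W := fun v hv => hmaps v hv hy
  have hzW : ∀ v ∈ Icc 0 T₀, φ v z ∈ W := fun v hv => hmaps v hv (mem_of_mem_nhds hV)
  have hgron := hφ.norm_sub_sub_le_of_lipschitzOnWith hK hyW hzW u huT₀
  have hβu : β u < c := hδβ (by
    rw [Real.dist_eq, sub_zero, abs_of_nonneg hu.1]
    linarith [hu.2.trans (min_le_right _ _)])
  set a := φ u y
  set b := φ u z
  calc ‖η a - η b - A (y - z)‖ = ‖(η a - η b - A (a - b)) + A (a - b - (y - z))‖ := by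
        rw [map_sub A (a - b)]; abel_nf
    _ ≤ ε * ‖a - b‖ + ‖A‖ * ‖a - b - (y - z)‖ :=
        norm_add_le_of_le (happrox _ (hyW u huT₀) _ (hzW u huT₀))
          (A.le_opNorm _)
    _ ≤ ε * (‖a - b - (y - z)‖ + ‖y - z‖) + ‖A‖ * ‖a - b - (y - z)‖ := by
        gcongr; exact norm_le_norm_sub_add _ _
    _ ≤ ε * (‖y - z‖ * (exp (K * u) - 1) + ‖y - z‖) + ‖A‖ * (‖y - z‖ * (exp (K * u) - 1)) := by
        gcongr
    _ = β u * ‖y - z‖ := by simp only [β, hε]; ring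
    _ ≤ c * ‖y - z‖ := by gcongr

theorem hasDerivWithinAt_fderiv_Ici (hφ : IsFlow η φ) {A : E →L[ℝ] E} {z : E}
    (hη : HasStrictFDerivAt η A z) (hφd : ∀ h, DifferentiableAt ℝ (φ h) z) :
    HasDerivWithinAt (fun h => fderiv ℝ (φ h) z) A (Ici 0) 0 := by
  rw [hasDerivWithinAt_iff_isLittleO, Asymptotics.isLittleO_iff]
  intro c hc
  obtain ⟨T, hT, V, hV, hlin⟩ := hφ.exists_norm_sub_sub_le hη hc
  filter_upwards [Icc_mem_nhdsGE hT] with h hh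
  rw [hφ.zero_eq, fderiv_id, sub_zero, Real.norm_of_nonneg hh.1]
  have hk : HasFDerivAt (fun y => φ h y - y - h • A y)
      (fderiv ℝ (φ h) z - ContinuousLinearMap.id ℝ E - h • A) z :=
    (((hφd h).hasFDerivAt).sub (hasFDerivAt_id z)).sub (A.hasFDerivAt.const_smul h)
  refine hk.le_of_lip' (by positivity [hh.1]) ?_
  filter_upwards [hV] with y hy
  -- the increment of `y ↦ φ h y - y - h • A y` between `z` and `y` is the increment on `[0, h]`
  -- of `u ↦ φ u y - φ u z - u • A (y - z)`, whose derivative `exists_norm_sub_sub_le` controls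
  have hmvt := norm_image_sub_le_of_norm_deriv_le_segment'
    (f := fun u => φ u y - φ u z - u • A (y - z))
    (f' := fun u => η (φ u y) - η (φ u z) - A (y - z))
    (fun u _ => (((hφ.hasDerivAt u y).sub (hφ.hasDerivAt u z)).sub
      ((hasDerivAt_id u).smul_const (A (y - z)))).hasDerivWithinAt.congr_deriv (by simp))
    (fun u hu => hlin y hy u ⟨hu.1, hu.2.le.trans hh.2⟩) h ⟨hh.1, le_rfl⟩
  calc ‖φ h y - y - h • A y - (φ h z - z - h • A z)‖
      = ‖φ h y - φ h z - h • A (y - z) - (φ 0 y - φ 0 z - (0 : ℝ) • A (y - z))‖ := by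
        simp only [hφ.zero_apply, zero_smul, sub_zero, map_sub, smul_sub]; abel_nf
    _ ≤ c * ‖y - z‖ * (h - 0) := hmvt
    _ = c * h * ‖y - z‖ := by ring

theorem hasDerivAt_fderiv_zero (hφ : IsFlow η φ) {A : E →L[ℝ] E} {z : E}
    (hη : HasStrictFDerivAt η A z) (hφd : ∀ h, DifferentiableAt ℝ (φ h) z) :
    HasDerivAt (fun h => fderiv ℝ (φ h) z) A 0 := by
  have hright := hφ.hasDerivWithinAt_fderiv_Ici hη hφd
  have hleft : HasDerivWithinAt (fun h => fderiv ℝ (φ h) z) A (Iic 0) 0 := by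
    have := (hφ.neg.hasDerivWithinAt_fderiv_Ici hη.neg fun h => hφd (-h)).scomp_of_eq 0
      (hasDerivWithinAt_neg 0 (Iic 0)) (fun h hh => neg_nonneg.2 hh) neg_zero.symm
    simpa [Function.comp_def] using this
  simpa [Iic_union_Ici] using hleft.union hright

theorem fderiv_add (hφ : IsFlow η φ) (hη : LocallyLipschitz η)
    (hφd : ∀ t, Differentiable ℝ (φ t)) (s t : ℝ) (x : E) :
    fderiv ℝ (φ (s + t)) x = (fderiv ℝ (φ s) (φ t x)).comp (fderiv ℝ (φ t) x) := by
  rw [← fderiv_comp x (hφd s _) (hφd t x)]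
  exact congrArg (fderiv ℝ · x) (funext (hφ.map_add hη s t))

theorem hasDerivAt_fderiv (hφ : IsFlow η φ) (hη : ContDiff ℝ 1 η)
    (hφd : ∀ t, Differentiable ℝ (φ t)) (x : E) (t : ℝ) :
    HasDerivAt (fun s => fderiv ℝ (φ s) x)
      ((fderiv ℝ η (φ t x)).comp (fderiv ℝ (φ t) x)) t := by
  have h0 := hφ.hasDerivAt_fderiv_zero (hη.contDiffAt.hasStrictFDerivAt one_ne_zero)
    fun h => hφd h (φ t x)
  rw [← sub_self t] at h0
  have := (h0.comp_sub_const t t).clm_comp (hasDerivAt_const t (fderiv ℝ (φ t) x))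
  simp only [ContinuousLinearMap.comp_zero, add_zero] at this
  refine this.congr_of_eventuallyEq (Eventually.of_forall fun s => ?_)
  show fderiv ℝ (φ s) x = (fderiv ℝ (φ (s - t)) (φ t x)).comp (fderiv ℝ (φ t) x)
  rw [← hφ.fderiv_add hη.locallyLipschitz hφd, sub_add_cancel]

theorem fderiv_neg_comp_fderiv (hφ : IsFlow η φ) (hη : LocallyLipschitz η)
    (hφd : ∀ t, Differentiable ℝ (φ t)) (t : ℝ) (x : E) :
    (fderiv ℝ (φ (-t)) (φ t x)).comp (fderiv ℝ (φ t) x) = ContinuousLinearMap.id ℝ E := by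
  rw [← hφ.fderiv_add hη hφd, neg_add_cancel, hφ.zero_eq, fderiv_id]

theorem fderiv_comp_fderiv_neg (hφ : IsFlow η φ) (hη : LocallyLipschitz η)
    (hφd : ∀ t, Differentiable ℝ (φ t)) (t : ℝ) (x : E) :
    (fderiv ℝ (φ t) x).comp (fderiv ℝ (φ (-t)) (φ t x)) = ContinuousLinearMap.id ℝ E := by
  have := hφ.fderiv_neg_comp_fderiv hη hφd (-t) (φ t x)
  rwa [neg_neg, hφ.map_neg_map hη] at this

theorem isInvertible_fderiv (hφ : IsFlow η φ) (hη : LocallyLipschitz η)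
    (hφd : ∀ t, Differentiable ℝ (φ t)) (t : ℝ) (x : E) : (fderiv ℝ (φ t) x).IsInvertible :=
  .of_inverse (hφ.fderiv_comp_fderiv_neg hη hφd t x) (hφ.fderiv_neg_comp_fderiv hη hφd t x)

theorem inverse_fderiv (hφ : IsFlow η φ) (hη : LocallyLipschitz η)
    (hφd : ∀ t, Differentiable ℝ (φ t)) (t : ℝ) (x : E) :
    (fderiv ℝ (φ t) x).inverse = fderiv ℝ (φ (-t)) (φ t x) :=
  ContinuousLinearMap.inverse_eq (hφ.fderiv_comp_fderiv_neg hη hφd t x)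
    (hφ.fderiv_neg_comp_fderiv hη hφd t x)

theorem hasDerivAt_pullback [CompleteSpace E] (hφ : IsFlow η φ) (hη : ContDiff ℝ 1 η)
    (hφd : ∀ t, Differentiable ℝ (φ t)) {ξ : E → E} {x : E} {t : ℝ}
    (hξ : DifferentiableAt ℝ ξ (φ t x)) :
    HasDerivAt (fun s => pullback ℝ (φ s) ξ x) (pullback ℝ (φ t) (lieBracket ℝ η ξ) x) t := by
  have hinv := (hφ.hasDerivAt_fderiv hη hφd x t).clm_inverse
    (hφ.isInvertible_fderiv hη.locallyLipschitz hφd t x)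
  have hξφ := hξ.hasFDerivAt.comp_hasDerivAt t (hφ.hasDerivAt t x)
  refine (hinv.clm_apply hξφ).congr_deriv ?_
  simp only [pullback, lieBracket, neg_apply, ContinuousLinearMap.comp_apply,
    Function.comp_apply, (hφ.isInvertible_fderiv hη.locallyLipschitz hφd t x).self_apply_inverse,
    map_sub]
  abel

theorem fderiv_comp_neg {F : Type*} [NormedAddCommGroup F] [NormedSpace ℝ F] (hφ : IsFlow η φ)
    (hη : LocallyLipschitz η) (hφd : ∀ t, Differentiable ℝ (φ t)) {f : E → F} {x : E}
    (hf : DifferentiableAt ℝ f x) (s : ℝ) :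
    fderiv ℝ (fun y => f (φ (-s) y)) (φ s x) = (fderiv ℝ f x).comp (fderiv ℝ (φ s) x).inverse := by
  have hx := hφ.map_neg_map hη s x
  have := fderiv_comp (φ s x) (hx.symm ▸ hf) (hφd (-s) (φ s x))
  rwa [hx, ← hφ.inverse_fderiv hη hφd] at this

end IsFlow

end Flow

/-- for `C¹` vector fields `U = ξ·∇`, `V = η·∇` with flow `φ` of `V`
(`φ t x = e^{tV}x`) and `ψ ∈ C¹`, the function
`t ↦ U(ψ ∘ e^{-tV})(e^{tV}x)` is differentiable with derivative
`[V,U](ψ ∘ e^{-tV})(e^{tV}x)`, where `[V,U] = (Vξ − Uη)·∇`. -/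
theorem lie_derivative_flow_conjugation {n : ℕ}
    (ξ η : (Fin n → ℝ) → (Fin n → ℝ))
    (hξ : ContDiff ℝ 1 ξ) (hη : ContDiff ℝ 1 η)
    (ψ : (Fin n → ℝ) → ℝ) (hψ : ContDiff ℝ 1 ψ)
    (φ : ℝ → (Fin n → ℝ) → (Fin n → ℝ))
    (hφ0 : ∀ x, φ 0 x = x)
    (hφ : ∀ t x, HasDerivAt (fun s => φ s x) (η (φ t x)) t)
    (hφx : ∀ t, ContDiff ℝ 1 (φ t))
    (x : Fin n → ℝ) (t : ℝ) :
    HasDerivAt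
      (fun s => fderiv ℝ (fun y => ψ (φ (-s) y)) (φ s x) (ξ (φ s x)))
      (fderiv ℝ (fun y => ψ (φ (-t) y)) (φ t x)
        (fderiv ℝ ξ (φ t x) (η (φ t x)) - fderiv ℝ η (φ t x) (ξ (φ t x)))) t := by
  have hflow : IsFlow η φ := ⟨hφ0, hφ⟩
  have hφd : ∀ t, Differentiable ℝ (φ t) := fun t => (hφx t).differentiable one_ne_zero
  have hpull := hflow.hasDerivAt_pullback hη hφd (x := x) (hξ.differentiable one_ne_zero (φ t x))
  simp only [hflow.fderiv_comp_neg hη.locallyLipschitz hφd (hψ.differentiable one_ne_zero x)]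
  exact (fderiv ℝ ψ x).hasFDerivAt.comp_hasDerivAt t hpull
end
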